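/- Let H be a complex inner product space and B : H × H → L¹([0,2π), dθ) a map that is conjugate-linear in the first argument and linear in the second argument, such that for every ψ ∈ H the function B(ψ,ψ) is nonnegative almost everywhere and ∫_0^{2π} B(ψ,ψ)(θ) dθ = 2π‖ψ‖². Then for all ψ, φ ∈ H, ‖B(ψ,φ)‖_{L¹} ≤ 2π‖ψ‖‖φ‖. -/

import Mathlib

open MeasureTheory Real Set
open scoped ComplexConjugate ComplexOrder

/-!
For every `c : ℂ`, positivity of `B(ψ + cφ, ψ + cφ)` says that at almost every `θ` the values
`B(ψ,ψ)(θ), B(ψ,φ)(θ), B(φ,ψ)(θ), B(φ,φ)(θ)` form a positive semidefinite `2 × 2` matrix, hence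
`|B(ψ,φ)(θ)| ≤ (B(ψ,ψ)(θ) + B(φ,φ)(θ)) / 2`. The exceptional null set depends on `c`, but the
condition is closed in `c`, so countably many `c` suffice. Integrating gives
`‖B(ψ,φ)‖₁ ≤ π (‖ψ‖² + ‖φ‖²)`, and since `B(tψ, t⁻¹φ) = B(ψ,φ)` for real `t > 0`, the choice
`t² = ‖φ‖ / ‖ψ‖` turns the right-hand side into `2π ‖ψ‖ ‖φ‖`.
-/

theorem MeasureTheory.ae_forall_of_isClosed {α X : Type*} [MeasurableSpace α] {μ : Measure α}
    [TopologicalSpace X] [TopologicalSpace.SeparableSpace X] {p : α → X → Prop}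
    (hp : ∀ a, IsClosed {x | p a x}) (h : ∀ x, ∀ᵐ a ∂μ, p a x) : ∀ᵐ a ∂μ, ∀ x, p a x := by
  obtain ⟨s, hs, hsd⟩ := TopologicalSpace.exists_countable_dense X
  filter_upwards [(ae_ball_iff hs).2 fun x _ => h x] with a ha x
  exact (hp a).closure_subset_iff.2 (fun y hy => ha y hy) (hsd.closure_eq ▸ mem_univ x)

theorem Complex.norm_le_of_forall_nonneg_quadratic {u v a b : ℂ}
    (h : ∀ c : ℂ, 0 ≤ u + c * a + conj c * b + conj c * c * v) :
    ‖a‖ ≤ (u.re + v.re) / 2 := by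
  have h0 := h 0
  have h1 := h 1
  have hm1 := h (-1)
  have hI := h I
  simp only [nonneg_iff, map_zero, map_one, map_neg, conj_I, add_re, add_im, mul_re, mul_im,
    neg_re, neg_im, one_re, one_im, I_re, I_im, zero_mul, one_mul, mul_zero,
    mul_one, neg_zero, sub_zero, add_zero, zero_add] at h0 h1 hm1 hI
  -- `c = 0, ±1, I` force `b = conj a`; a unimodular `c` with `c * a = -‖a‖` then gives the bound.
  have hb : b = conj a := Complex.ext (by rw [conj_re]; linarith) (by rw [conj_im]; linarith)
  set c := -exp (↑(-a.arg) * I)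
  have hca : c * a = -‖a‖ := by
    conv_lhs => rw [← norm_mul_exp_arg_mul_I a]
    rw [neg_mul, mul_left_comm, ← exp_add, ofReal_neg, neg_mul, neg_add_cancel, exp_zero, mul_one]
  have hcc : conj c * c = 1 := by
    rw [mul_comm, mul_conj', norm_neg, norm_exp_ofReal_mul_I, ofReal_one, one_pow]
  have hc := (nonneg_iff.1 (h c)).1
  rw [hcc, hb, ← map_mul, hca] at hc
  simp only [add_re, neg_re, ofReal_re, conj_re, one_mul] at hc
  linarith

theorem LinearMap.norm_apply_le_of_le_sq_add_sq {E F G : Type*} [NormedAddCommGroup E]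
    [NormedSpace ℂ E] [NormedAddCommGroup F] [NormedSpace ℂ F] [SeminormedAddCommGroup G]
    [Module ℂ G] (B : E →ₗ⋆[ℂ] F →ₗ[ℂ] G) {C : ℝ}
    (h : ∀ x y, ‖B x y‖ ≤ C * (‖x‖ ^ 2 + ‖y‖ ^ 2)) (x : E) (y : F) :
    ‖B x y‖ ≤ 2 * C * ‖x‖ * ‖y‖ := by
  rcases eq_or_ne x 0 with rfl | hx
  · simp
  rcases eq_or_ne y 0 with rfl | hy
  · simp
  have hx' := norm_pos_iff.2 hx
  have hy' := norm_pos_iff.2 hy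
  set t := √(‖y‖ / ‖x‖)
  have ht : 0 < t := sqrt_pos.2 (by positivity)
  have ht2 : t ^ 2 = ‖y‖ / ‖x‖ := sq_sqrt (by positivity)
  have hscale : B ((t : ℂ) • x) ((t : ℂ)⁻¹ • y) = B x y := by
    rw [map_smulₛₗ, map_smulₛₗ, LinearMap.smul_apply, smul_smul, RingHom.id_apply,
      Complex.conj_ofReal, inv_mul_cancel₀ (by exact_mod_cast ht.ne'), one_smul]
  calc ‖B x y‖ = ‖B ((t : ℂ) • x) ((t : ℂ)⁻¹ • y)‖ := by rw [hscale]
    _ ≤ C * ((t * ‖x‖) ^ 2 + (‖y‖ / t) ^ 2) := by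
      convert h _ _ using 4 <;> simp [norm_smul, abs_of_pos ht, div_eq_inv_mul]
    _ = 2 * C * ‖x‖ * ‖y‖ := by
      rw [mul_pow, div_pow, ht2]
      field_simp
      ring

section
variable {α : Type*} [MeasurableSpace α] {μ : Measure α}
  {H : Type*} [AddCommGroup H] [Module ℂ H] (B : H →ₗ⋆[ℂ] H →ₗ[ℂ] Lp ℂ 1 μ)

theorem apply_add_smul_self_ae_eq (ψ φ : H) (c : ℂ) :
    (B (ψ + c • φ) (ψ + c • φ) : α → ℂ) =ᵐ[μ] fun θ => (B ψ ψ : α → ℂ) θ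
      + c * (B ψ φ : α → ℂ) θ + conj c * (B φ ψ : α → ℂ) θ + conj c * c * (B φ φ : α → ℂ) θ := by
  have hexp : B (ψ + c • φ) (ψ + c • φ)
      = B ψ ψ + c • B ψ φ + conj c • B φ ψ + (conj c * c) • B φ φ := by
    simp only [map_add, map_smulₛₗ, LinearMap.add_apply, LinearMap.smul_apply, RingHom.id_apply]
    module
  rw [hexp]
  filter_upwards [Lp.coeFn_add (B ψ ψ + c • B ψ φ + conj c • B φ ψ) ((conj c * c) • B φ φ),
    Lp.coeFn_add (B ψ ψ + c • B ψ φ) (conj c • B φ ψ), Lp.coeFn_add (B ψ ψ) (c • B ψ φ),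
    Lp.coeFn_smul c (B ψ φ), Lp.coeFn_smul (conj c) (B φ ψ),
    Lp.coeFn_smul (conj c * c) (B φ φ)] with θ h₁ h₂ h₃ h₄ h₅ h₆
  simp only [h₁, h₂, h₃, h₄, h₅, h₆, Pi.add_apply, Pi.smul_apply, smul_eq_mul]

theorem ae_forall_nonneg_apply_add_smul_self (hpos : ∀ ψ, ∀ᵐ θ ∂μ, 0 ≤ (B ψ ψ : α → ℂ) θ)
    (ψ φ : H) :
    ∀ᵐ θ ∂μ, ∀ c : ℂ, 0 ≤ (B ψ ψ : α → ℂ) θ + c * (B ψ φ : α → ℂ) θ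
      + conj c * (B φ ψ : α → ℂ) θ + conj c * c * (B φ φ : α → ℂ) θ :=
  ae_forall_of_isClosed (fun _ => isClosed_le continuous_const (by fun_prop)) fun c => by
    filter_upwards [hpos (ψ + c • φ), apply_add_smul_self_ae_eq B ψ φ c] with θ hθ h
    rwa [h] at hθ

theorem norm_le_half_add_re_integral (hpos : ∀ ψ, ∀ᵐ θ ∂μ, 0 ≤ (B ψ ψ : α → ℂ) θ) (ψ φ : H) :
    ‖B ψ φ‖ ≤ ((∫ θ, (B ψ ψ : α → ℂ) θ ∂μ).re + (∫ θ, (B φ φ : α → ℂ) θ ∂μ).re) / 2 := by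
  have hψ : Integrable (fun θ => ((B ψ ψ : α → ℂ) θ).re) μ :=
    (L1.integrable_coeFn (B ψ ψ)).re
  have hφ : Integrable (fun θ => ((B φ φ : α → ℂ) θ).re) μ :=
    (L1.integrable_coeFn (B φ φ)).re
  calc ‖B ψ φ‖ = ∫ θ, ‖(B ψ φ : α → ℂ) θ‖ ∂μ := L1.norm_eq_integral_norm _
    _ ≤ ∫ θ, (((B ψ ψ : α → ℂ) θ).re + ((B φ φ : α → ℂ) θ).re) / 2 ∂μ := by
      refine integral_mono_ae (L1.integrable_coeFn _).norm ((hψ.add hφ).div_const 2) ?_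
      filter_upwards [ae_forall_nonneg_apply_add_smul_self B hpos ψ φ] with θ h
      exact Complex.norm_le_of_forall_nonneg_quadratic h
    _ = _ := by
      rw [integral_div, integral_add hψ hφ]
      congr 2
      · exact integral_re (L1.integrable_coeFn (B ψ ψ))
      · exact integral_re (L1.integrable_coeFn (B φ φ))

end

/-- **`L¹`-boundedness of a phase observable as a sesquilinear map.**
Let `H` be a complex inner product space and `B : H × H → L¹([0,2π), dθ)`
conjugate-linear in the first argument and linear in the second, such that for
every `ψ`, `B(ψ,ψ)` is nonnegative a.e. and `∫₀^{2π} B(ψ,ψ)(θ) dθ = 2π‖ψ‖²`.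
Then `‖B(ψ,φ)‖₁ ≤ 2π‖ψ‖‖φ‖` for all `ψ, φ`. -/
theorem phase_observable_L1_bounded
    {H : Type*} [NormedAddCommGroup H] [InnerProductSpace ℂ H]
    (B : H → H → Lp ℂ 1 (volume.restrict (Ico (0 : ℝ) (2 * π))))
    (hadd₁ : ∀ ψ ψ' φ : H, B (ψ + ψ') φ = B ψ φ + B ψ' φ)
    (hsmul₁ : ∀ (c : ℂ) (ψ φ : H), B (c • ψ) φ = (conj c) • B ψ φ)
    (hadd₂ : ∀ ψ φ φ' : H, B ψ (φ + φ') = B ψ φ + B ψ φ')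
    (hsmul₂ : ∀ (c : ℂ) (ψ φ : H), B ψ (c • φ) = c • B ψ φ)
    (hpos : ∀ ψ : H, ∀ᵐ θ ∂(volume.restrict (Ico (0 : ℝ) (2 * π))),
      0 ≤ (B ψ ψ : ℝ → ℂ) θ)
    (hnorm : ∀ ψ : H, ∫ θ, (B ψ ψ : ℝ → ℂ) θ ∂(volume.restrict (Ico (0 : ℝ) (2 * π)))
      = ((2 * π * ‖ψ‖ ^ 2 : ℝ) : ℂ)) :
    ∀ ψ φ : H, ‖B ψ φ‖ ≤ 2 * π * ‖ψ‖ * ‖φ‖ := by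
  let Bₛ : H →ₗ⋆[ℂ] H →ₗ[ℂ] Lp ℂ 1 (volume.restrict (Ico (0 : ℝ) (2 * π))) :=
    LinearMap.mk₂'ₛₗ (starRingEnd ℂ) (RingHom.id ℂ) B hadd₁ hsmul₁ hadd₂ hsmul₂
  have hquad (ψ φ : H) : ‖Bₛ ψ φ‖ ≤ π * (‖ψ‖ ^ 2 + ‖φ‖ ^ 2) := by
    have h := norm_le_half_add_re_integral Bₛ hpos ψ φ
    simp only [Bₛ, LinearMap.mk₂'ₛₗ_apply, hnorm, Complex.ofReal_re] at h ⊢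
    linarith
  exact Bₛ.norm_apply_le_of_le_sq_add_sq hquad
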